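/- arXiv:2001.01303 — 4 statements merged into one kernel-verified Lean document; each statement's English description precedes it below -/
import Mathlib

section
/- Let a, b, c, d ∈ ℝ³ be affinely independent points (so the segments [a,b] and [c,d] lie on skew lines, are disjoint, and the four quadrilateral normals n₁, n₂, n₃, n₄ of (a,b,c,d) are defined). Then 4π·|L(a,b;c,d)| = arcsin(⟨n₁,n₂⟩) + arcsin(⟨n₂,n₃⟩) + arcsin(⟨n₃,n₄⟩) + arcsin(⟨n₄,n₁⟩). In other words, the Gauss linking integral of two segments admits the finite (integral-free) form given by the sum of the four arcsines of inner products of consecutive unit normals. -/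
open MeasureTheory RealInnerProductSpace

noncomputable section

/-- Euclidean 3-space. -/
abbrev R3 := EuclideanSpace ℝ (Fin 3)

/-- The cross product on Euclidean 3-space. -/
def cross3 (u v : R3) : R3 :=
  (EuclideanSpace.equiv (Fin 3) ℝ).symm
    ![u 1 * v 2 - u 2 * v 1, u 2 * v 0 - u 0 * v 2, u 0 * v 1 - u 1 * v 0]

/-- The scalar triple product `det(u,v,w) = ⟨u × v, w⟩`. -/
def det3 (u v w : R3) : ℝ := ⟪cross3 u v, w⟫

/-- The Gauss linking integral of the segments `[a,b]` and `[c,d]`. -/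
def gaussL (a b c d : R3) : ℝ :=
  (1 / (4 * Real.pi)) * ∫ t in (0:ℝ)..1, ∫ s in (0:ℝ)..1,
    det3 (b - a) (d - c) ((a + t • (b - a)) - (c + s • (d - c))) /
      ‖(a + t • (b - a)) - (c + s • (d - c))‖ ^ 3

/-- The unit vector in the direction of `v`. -/
def unitVec (v : R3) : R3 := ‖v‖⁻¹ • v

/-- First quadrilateral normal of `(p,q,r,s)`. -/
def qn1 (p q r s : R3) : R3 := unitVec (cross3 (p - r) (p - s))

/-- Second quadrilateral normal of `(p,q,r,s)`. -/
def qn2 (p q r s : R3) : R3 := unitVec (cross3 (p - s) (q - s))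

/-- Third quadrilateral normal of `(p,q,r,s)`. -/
def qn3 (p q r s : R3) : R3 := unitVec (cross3 (q - s) (q - r))

/-- Fourth quadrilateral normal of `(p,q,r,s)`. -/
def qn4 (p q r s : R3) : R3 := unitVec (cross3 (q - r) (p - r))

/-!
Write `u = b - a`, `v = d - c` and `W t s = γ₁ t - γ₂ s = (a - c) + t • u - s • v`. The triple
product `D = det(u, v, W)` does not depend on `(t, s)` and is nonzero by affine independence, so
`4π |L| = ∫∫ |D| / ‖W‖³`. Let `F t s = arcsin ⟪unit (W × u), unit (W × v)⟫`, the arcsine of the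
cosine of the dihedral angle along `W` between the planes spanned by `W, u` and by `W, v`.
Along `t` the vector `W × u` is constant while `W × v` moves on a line, and along `s` the reverse
holds; a direct computation (Binet–Cauchy) gives `∂ₛ ∂ₜ F = |D| / ‖W‖³`. The fundamental theorem
of calculus, applied twice, turns the integral into the alternating sum of `F` at the four
corners `W ∈ {a - c, a - d, b - d, b - c}`, where the two planes are faces of the tetrahedron
`abcd` and the unit normals are `± nᵢ`.
-/

section Calculus

variable {E : Type*} [NormedAddCommGroup E] [InnerProductSpace ℝ E]

theorem HasDerivAt.norm {f : ℝ → E} {f' : E} {x : ℝ} (hf : HasDerivAt f f' x) (h0 : f x ≠ 0) :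
    HasDerivAt (‖f ·‖) (⟪f x, f'⟫ / ‖f x‖) x := by
  have := hf.norm_sq.sqrt (by positivity)
  simp only [Real.sqrt_sq (norm_nonneg _)] at this
  convert this using 1
  field_simp

theorem hasDerivAt_neg_inner_div_norm_sub_smul {q v : E} {s : ℝ} (hw : q - s • v ≠ 0) :
    HasDerivAt (fun s : ℝ => -⟪q - s • v, v⟫ / ‖q - s • v‖)
      ((‖q‖ ^ 2 * ‖v‖ ^ 2 - ⟪q, v⟫ ^ 2) / ‖q - s • v‖ ^ 3) s := by
  have hw' : HasDerivAt (fun s : ℝ => q - s • v) (-v) s := by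
    simpa using ((hasDerivAt_id s).smul_const v).const_sub q
  refine ((hw'.inner ℝ (hasDerivAt_const s v)).neg.div (hw'.norm hw)
    (norm_ne_zero_iff.mpr hw)).congr_deriv ?_
  have hnorm : ‖q - s • v‖ ^ 2 = ‖q‖ ^ 2 - 2 * s * ⟪q, v⟫ + s ^ 2 * ‖v‖ ^ 2 := by
    rw [norm_sub_sq_real, norm_smul, real_inner_smul_right, Real.norm_eq_abs, mul_pow, sq_abs]
    ring
  simp only [inner_sub_left, inner_neg_left, inner_neg_right, inner_zero_right,
    real_inner_smul_left, real_inner_self_eq_norm_sq, Pi.neg_apply]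
  field_simp
  linear_combination (‖v‖ ^ 2) * hnorm

theorem hasDerivAt_arcsin_inner_div_norm_mul_norm {c n e : E} {t : ℝ}
    (hgram : 0 < ‖c‖ ^ 2 * ‖n + t • e‖ ^ 2 - ⟪c, n + t • e⟫ ^ 2) :
    HasDerivAt (fun t : ℝ => Real.arcsin (⟪c, n + t • e⟫ / (‖c‖ * ‖n + t • e‖)))
      ((⟪c, e⟫ * ‖n + t • e‖ ^ 2 - ⟪c, n + t • e⟫ * ⟪n + t • e, e⟫) /
        (‖n + t • e‖ ^ 2 * √(‖c‖ ^ 2 * ‖n + t • e‖ ^ 2 - ⟪c, n + t • e⟫ ^ 2))) t := by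
  set N := n + t • e with hN_def
  have hN : HasDerivAt (fun t : ℝ => n + t • e) e t := by
    simpa using ((hasDerivAt_id t).smul_const e).const_add n
  have hc : c ≠ 0 := by rintro rfl; simp at hgram
  have hN0 : N ≠ 0 := by rintro hN0; simp [hN0] at hgram
  set x := ⟪c, N⟫ / (‖c‖ * ‖N‖)
  have hx : 1 - x ^ 2 = (√(‖c‖ ^ 2 * ‖N‖ ^ 2 - ⟪c, N⟫ ^ 2) / (‖c‖ * ‖N‖)) ^ 2 := by
    rw [div_pow, div_pow, Real.sq_sqrt hgram.le]
    field_simp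
  have hx1 : 0 < 1 - x ^ 2 := by
    rw [hx]; positivity
  have hquot := ((hasDerivAt_const t c).inner ℝ hN).div ((hN.norm hN0).const_mul ‖c‖)
    (by positivity)
  have harc := (Real.hasDerivAt_arcsin (x := x) (by nlinarith) (by nlinarith)).comp t hquot
  refine harc.congr_deriv ?_
  rw [hx, Real.sqrt_sq (by positivity)]
  simp only [← hN_def, inner_zero_left, add_zero]
  field_simp

end Calculus

theorem integral_integral_eq_of_hasDerivAt {f G F : ℝ → ℝ → ℝ} {a b c d : ℝ}
    (hG : ∀ t s, HasDerivAt (G t) (f t s) s) (hF : ∀ t s, HasDerivAt (F · s) (G t s) t)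
    (hf : ∀ t, IntervalIntegrable (f t) volume c d)
    (hGint : ∀ s, IntervalIntegrable (G · s) volume a b) :
    ∫ t in a..b, ∫ s in c..d, f t s = F b d - F a d - (F b c - F a c) := by
  have hinner : ∀ t, ∫ s in c..d, f t s = G t d - G t c := fun t =>
    intervalIntegral.integral_eq_sub_of_hasDerivAt (fun s _ => hG t s) (hf t)
  simp_rw [hinner]
  rw [intervalIntegral.integral_sub (hGint d) (hGint c),
    intervalIntegral.integral_eq_sub_of_hasDerivAt (fun t _ => hF t d) (hGint d),
    intervalIntegral.integral_eq_sub_of_hasDerivAt (fun t _ => hF t c) (hGint c)]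

theorem abs_integral_integral_const_div {g : ℝ → ℝ → ℝ} {a b c d : ℝ} (hab : a ≤ b) (hcd : c ≤ d)
    (hg : ∀ t s, 0 ≤ g t s) (k : ℝ) :
    |∫ t in a..b, ∫ s in c..d, k / g t s| = ∫ t in a..b, ∫ s in c..d, |k| / g t s := by
  simp only [div_eq_mul_inv, intervalIntegral.integral_const_mul, abs_mul]
  rw [abs_of_nonneg (intervalIntegral.integral_nonneg hab fun t _ =>
    intervalIntegral.integral_nonneg hcd fun s _ => inv_nonneg.mpr (hg t s))]

section CrossProduct

@[simp] theorem cross3_apply_zero (u v : R3) : cross3 u v 0 = u 1 * v 2 - u 2 * v 1 := rfl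
@[simp] theorem cross3_apply_one (u v : R3) : cross3 u v 1 = u 2 * v 0 - u 0 * v 2 := rfl
@[simp] theorem cross3_apply_two (u v : R3) : cross3 u v 2 = u 0 * v 1 - u 1 * v 0 := rfl

theorem R3.ext {x y : R3} (h0 : x 0 = y 0) (h1 : x 1 = y 1) (h2 : x 2 = y 2) : x = y := by
  ext i
  fin_cases i <;> assumption

theorem R3.inner_eq (x y : R3) : ⟪x, y⟫ = x 0 * y 0 + x 1 * y 1 + x 2 * y 2 := by
  simp only [PiLp.inner_apply, Fin.sum_univ_three, RCLike.inner_apply, conj_trivial]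
  ring

theorem R3.norm_sq_eq (x : R3) : ‖x‖ ^ 2 = x 0 * x 0 + x 1 * x 1 + x 2 * x 2 := by
  rw [← real_inner_self_eq_norm_sq, R3.inner_eq]

theorem det3_eq (u v w : R3) : det3 u v w =
    (u 1 * v 2 - u 2 * v 1) * w 0 + (u 2 * v 0 - u 0 * v 2) * w 1 +
      (u 0 * v 1 - u 1 * v 0) * w 2 := by
  rw [det3, R3.inner_eq, cross3_apply_zero, cross3_apply_one, cross3_apply_two]

theorem det3_add_smul_self_left (u v x : R3) (t : ℝ) : det3 u v (x + t • u) = det3 u v x := by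
  simp only [det3_eq, PiLp.add_apply, PiLp.smul_apply, smul_eq_mul]
  ring

theorem det3_sub_smul_self_right (u v x : R3) (s : ℝ) : det3 u v (x - s • v) = det3 u v x := by
  simp only [det3_eq, PiLp.sub_apply, PiLp.smul_apply, smul_eq_mul]
  ring

theorem det3_add_smul_sub_add_smul (a c u v : R3) (t s : ℝ) :
    det3 u v (a + t • u - (c + s • v)) = det3 u v (a - c) := by
  rw [show a + t • u - (c + s • v) = a - c + t • u - s • v by abel, det3_sub_smul_self_right,
    det3_add_smul_self_left]

theorem inner_cross3_eq_neg_det3 (u v x : R3) : ⟪cross3 x v, u⟫ = -det3 u v x := by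
  rw [det3_eq, R3.inner_eq, cross3_apply_zero, cross3_apply_one, cross3_apply_two]
  ring

theorem norm_cross3_sq (x v : R3) : ‖cross3 x v‖ ^ 2 = ‖x‖ ^ 2 * ‖v‖ ^ 2 - ⟪x, v⟫ ^ 2 := by
  simp only [R3.norm_sq_eq, R3.inner_eq, cross3_apply_zero, cross3_apply_one, cross3_apply_two]
  ring

theorem gram_cross3 (x u v : R3) :
    ‖cross3 x u‖ ^ 2 * ‖cross3 x v‖ ^ 2 - ⟪cross3 x u, cross3 x v⟫ ^ 2 =
      det3 u v x ^ 2 * ‖x‖ ^ 2 := by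
  simp only [R3.norm_sq_eq, det3_eq, R3.inner_eq, cross3_apply_zero, cross3_apply_one,
    cross3_apply_two]
  ring

theorem gram_cross3_mixed (x u v : R3) :
    ⟪cross3 x u, cross3 u v⟫ * ‖cross3 x v‖ ^ 2 -
      ⟪cross3 x u, cross3 x v⟫ * ⟪cross3 x v, cross3 u v⟫ = -(det3 u v x ^ 2 * ⟪x, v⟫) := by
  simp only [R3.norm_sq_eq, det3_eq, R3.inner_eq, cross3_apply_zero, cross3_apply_one,
    cross3_apply_two]
  ring

theorem cross3_add_smul_self (x u : R3) (t : ℝ) : cross3 (x + t • u) u = cross3 x u := by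
  apply R3.ext <;>
    simp only [cross3_apply_zero, cross3_apply_one, cross3_apply_two, PiLp.add_apply,
      PiLp.smul_apply, smul_eq_mul] <;>
    ring

theorem cross3_add_smul_left (x u v : R3) (t : ℝ) :
    cross3 (x + t • u) v = cross3 x v + t • cross3 u v := by
  apply R3.ext <;>
    simp only [cross3_apply_zero, cross3_apply_one, cross3_apply_two, PiLp.add_apply,
      PiLp.smul_apply, smul_eq_mul] <;>
    ring

theorem cross3_sub_smul_self (x v : R3) (s : ℝ) : cross3 (x - s • v) v = cross3 x v := by
  apply R3.ext <;>
    simp only [cross3_apply_zero, cross3_apply_one, cross3_apply_two, PiLp.sub_apply,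
      PiLp.smul_apply, smul_eq_mul] <;>
    ring

theorem det3_ne_zero_of_linearIndependent {u v w : R3} (h : LinearIndependent ℝ ![u, v, w]) :
    det3 u v w ≠ 0 := by
  let M : Matrix (Fin 3) (Fin 3) ℝ := .of fun i j => ![u, v, w] i j
  have hM : IsUnit M := Matrix.linearIndependent_rows_iff_isUnit.mp
    (h.map' (WithLp.linearEquiv 2 ℝ (Fin 3 → ℝ)).toLinearMap (LinearEquiv.ker _))
  have hdet : M.det = det3 u v w := by
    rw [Matrix.det_fin_three, det3_eq]
    simp only [M, Matrix.of_apply, Matrix.cons_val_zero, Matrix.cons_val_one, Matrix.cons_val_two,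
      Matrix.tail_cons, Matrix.head_cons]
    ring
  exact hdet ▸ ((Matrix.isUnit_iff_isUnit_det M).mp hM).ne_zero

theorem det3_ne_zero_of_affineIndependent {a b c d : R3} (h : AffineIndependent ℝ ![a, b, c, d]) :
    det3 (b - a) (d - c) (a - c) ≠ 0 := by
  rw [affineIndependent_iff_linearIndependent_vsub ℝ _ 0] at h
  let succ : Fin 3 ↪ {i : Fin 4 // i ≠ 0} := ⟨fun i => ⟨i.succ, i.succ_ne_zero⟩,
    fun i j hij => Fin.succ_injective _ (congrArg Subtype.val hij)⟩
  have hvsub : (fun i : {i : Fin 4 // i ≠ 0} => ![a, b, c, d] i -ᵥ ![a, b, c, d] 0) ∘ succ =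
      ![b - a, c - a, d - a] := by
    ext i : 1
    fin_cases i <;> rfl
  have hdet : det3 (b - a) (d - c) (a - c) = det3 (b - a) (c - a) (d - a) := by
    simp only [det3_eq, PiLp.sub_apply]
    ring
  exact hdet ▸ det3_ne_zero_of_linearIndependent (hvsub ▸ h.comp succ succ.injective)

@[fun_prop]
theorem Continuous.cross3 {α : Type*} [TopologicalSpace α] {f g : α → R3}
    (hf : Continuous f) (hg : Continuous g) : Continuous fun x => _root_.cross3 (f x) (g x) := by
  unfold _root_.cross3
  fun_prop

end CrossProduct

theorem inner_unitVec (x y : R3) : ⟪unitVec x, unitVec y⟫ = ⟪x, y⟫ / (‖x‖ * ‖y‖) := by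
  rw [unitVec, unitVec, real_inner_smul_left, real_inner_smul_right]
  ring

theorem unitVec_neg (x : R3) : unitVec (-x) = -unitVec x := by
  rw [unitVec, unitVec, norm_neg, smul_neg]

def dihedralArcsin (u v x : R3) : ℝ := Real.arcsin ⟪unitVec (cross3 x u), unitVec (cross3 x v)⟫

def dihedralArcsinDeriv (u v x : R3) : ℝ := -(|det3 u v x| * ⟪x, v⟫) / (‖cross3 x v‖ ^ 2 * ‖x‖)

section NonDegenerate

variable {u v x : R3} (hx : det3 u v x ≠ 0)
include hx

theorem ne_zero_of_det3_ne_zero : x ≠ 0 := by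
  rintro rfl
  simp [det3] at hx

theorem cross3_ne_zero_of_det3_ne_zero : cross3 x v ≠ 0 := by
  intro h
  rw [← neg_ne_zero, ← inner_cross3_eq_neg_det3, h, inner_zero_left] at hx
  exact hx rfl

theorem hasDerivAt_dihedralArcsinDeriv_sub_smul (s : ℝ) :
    HasDerivAt (fun s : ℝ => dihedralArcsinDeriv u v (x - s • v))
      (|det3 u v x| / ‖x - s • v‖ ^ 3) s := by
  have hxs : det3 u v (x - s • v) ≠ 0 := by rwa [det3_sub_smul_self_right]
  have hK : 0 < ‖cross3 x v‖ := norm_pos_iff.mpr (cross3_ne_zero_of_det3_ne_zero hx)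
  have hfun : (fun s : ℝ => dihedralArcsinDeriv u v (x - s • v)) =
      fun s => |det3 u v x| / ‖cross3 x v‖ ^ 2 * (-⟪x - s • v, v⟫ / ‖x - s • v‖) := by
    ext s
    rw [dihedralArcsinDeriv, det3_sub_smul_self_right, cross3_sub_smul_self]
    ring
  rw [hfun]
  refine ((hasDerivAt_neg_inner_div_norm_sub_smul
    (ne_zero_of_det3_ne_zero hxs)).const_mul _).congr_deriv ?_
  rw [← norm_cross3_sq]
  field_simp

theorem hasDerivAt_dihedralArcsin_add_smul (t : ℝ) :
    HasDerivAt (fun t : ℝ => dihedralArcsin u v (x + t • u))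
      (dihedralArcsinDeriv u v (x + t • u)) t := by
  have hxt : det3 u v (x + t • u) ≠ 0 := by rwa [det3_add_smul_self_left]
  have hfun : (fun t : ℝ => dihedralArcsin u v (x + t • u)) = fun t => Real.arcsin
      (⟪cross3 x u, cross3 x v + t • cross3 u v⟫ /
        (‖cross3 x u‖ * ‖cross3 x v + t • cross3 u v‖)) := by
    ext t
    rw [dihedralArcsin, inner_unitVec, cross3_add_smul_self, cross3_add_smul_left]
  have hgram := gram_cross3 (x + t • u) u v
  rw [cross3_add_smul_self, cross3_add_smul_left] at hgram
  have hpos : 0 < det3 u v (x + t • u) ^ 2 * ‖x + t • u‖ ^ 2 := by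
    have := ne_zero_of_det3_ne_zero hxt
    positivity
  rw [hfun]
  refine (hasDerivAt_arcsin_inner_div_norm_mul_norm (hgram ▸ hpos)).congr_deriv ?_
  rw [hgram, ← cross3_add_smul_self x u t, ← cross3_add_smul_left, gram_cross3_mixed,
    Real.sqrt_mul' _ (sq_nonneg _), Real.sqrt_sq_eq_abs, Real.sqrt_sq (norm_nonneg _),
    dihedralArcsinDeriv]
  field_simp
  rw [sq_abs]
  ring

theorem continuous_dihedralArcsinDeriv_add_smul :
    Continuous fun t : ℝ => dihedralArcsinDeriv u v (x + t • u) := by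
  simp only [dihedralArcsinDeriv, det3_add_smul_self_left]
  refine Continuous.div (by fun_prop) (by fun_prop) fun t => ?_
  have hxt : det3 u v (x + t • u) ≠ 0 := by rwa [det3_add_smul_self_left]
  have := ne_zero_of_det3_ne_zero hxt
  have := cross3_ne_zero_of_det3_ne_zero hxt
  positivity

end NonDegenerate

theorem integral_integral_abs_det3_div_norm_pow_three {a b c d : R3}
    (h : det3 (b - a) (d - c) (a - c) ≠ 0) :
    ∫ t in (0:ℝ)..1, ∫ s in (0:ℝ)..1,
      |det3 (b - a) (d - c) (a - c)| / ‖(a + t • (b - a)) - (c + s • (d - c))‖ ^ 3 =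
      dihedralArcsin (b - a) (d - c) (b - d) - dihedralArcsin (b - a) (d - c) (a - d) -
        (dihedralArcsin (b - a) (d - c) (b - c) - dihedralArcsin (b - a) (d - c) (a - c)) := by
  set u := b - a
  set v := d - c
  have hW : ∀ t s : ℝ, det3 u v (a + t • u - (c + s • v)) ≠ 0 := fun t s => by
    rwa [det3_add_smul_sub_add_smul]
  have hs : ∀ t s : ℝ, a + t • u - (c + s • v) = a + t • u - c - s • v := fun t s => by abel
  have ht : ∀ t s : ℝ, a + t • u - (c + s • v) = a - (c + s • v) + t • u := fun t s => by abel
  rw [integral_integral_eq_of_hasDerivAt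
    (F := fun t s => dihedralArcsin u v (a + t • u - (c + s • v)))
    (G := fun t s => dihedralArcsinDeriv u v (a + t • u - (c + s • v)))]
  · simp [u, v]
  · intro t s
    have hdet : det3 u v (a + t • u - c) = det3 u v (a - c) := by
      simpa using det3_add_smul_sub_add_smul a c u v t 0
    simp only [hs, ← hdet]
    exact hasDerivAt_dihedralArcsinDeriv_sub_smul (by simpa using hW t 0) s
  · intro t s
    simp only [ht]
    exact hasDerivAt_dihedralArcsin_add_smul (by simpa using hW 0 s) t
  · intro t
    refine (continuous_const.div (by fun_prop) fun s => ?_).intervalIntegrable _ _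
    exact pow_ne_zero _ (norm_ne_zero_iff.mpr (ne_zero_of_det3_ne_zero (hW t s)))
  · intro s
    simp only [ht]
    exact (continuous_dihedralArcsinDeriv_add_smul (by simpa using hW 0 s)).intervalIntegrable _ _

theorem four_pi_mul_abs_gaussL (a b c d : R3) :
    4 * Real.pi * |gaussL a b c d| = ∫ t in (0:ℝ)..1, ∫ s in (0:ℝ)..1,
      |det3 (b - a) (d - c) (a - c)| / ‖(a + t • (b - a)) - (c + s • (d - c))‖ ^ 3 := by
  rw [gaussL, abs_mul, abs_of_pos (by positivity), ← mul_assoc, mul_one_div_cancel (by positivity),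
    one_mul]
  simp only [det3_add_smul_sub_add_smul]
  exact abs_integral_integral_const_div zero_le_one zero_le_one (fun _ _ => by positivity) _

/-- Each quadrilateral normal, written at either corner `W` it touches, as `± W × u` or
`± W × v`. -/
theorem cross3_quadrilateral_corners (a b c d : R3) :
    (cross3 (a - c) (a - d) = -cross3 (a - d) (d - c) ∧
      cross3 (a - d) (b - d) = cross3 (a - d) (b - a)) ∧
    (cross3 (a - d) (b - d) = cross3 (b - d) (b - a) ∧
      cross3 (b - d) (b - c) = cross3 (b - d) (d - c)) ∧
    (cross3 (b - d) (b - c) = cross3 (b - c) (d - c) ∧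
      cross3 (b - c) (a - c) = -cross3 (b - c) (b - a)) ∧
    (cross3 (b - c) (a - c) = -cross3 (a - c) (b - a) ∧
      cross3 (a - c) (a - d) = -cross3 (a - c) (d - c)) := by
  refine ⟨⟨?_, ?_⟩, ⟨?_, ?_⟩, ⟨?_, ?_⟩, ?_, ?_⟩ <;> apply R3.ext <;>
    simp only [cross3_apply_zero, cross3_apply_one, cross3_apply_two, PiLp.sub_apply,
      PiLp.neg_apply] <;>
    ring

theorem arcsin_inner_qn1_qn2 (a b c d : R3) :
    Real.arcsin ⟪qn1 a b c d, qn2 a b c d⟫ = -dihedralArcsin (b - a) (d - c) (a - d) := by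
  obtain ⟨⟨h1, h2⟩, -⟩ := cross3_quadrilateral_corners a b c d
  rw [qn1, qn2, h1, h2, unitVec_neg, inner_neg_left, real_inner_comm, Real.arcsin_neg,
    dihedralArcsin]

theorem arcsin_inner_qn2_qn3 (a b c d : R3) :
    Real.arcsin ⟪qn2 a b c d, qn3 a b c d⟫ = dihedralArcsin (b - a) (d - c) (b - d) := by
  obtain ⟨-, ⟨h2, h3⟩, -⟩ := cross3_quadrilateral_corners a b c d
  rw [qn2, qn3, h2, h3, dihedralArcsin]

theorem arcsin_inner_qn3_qn4 (a b c d : R3) :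
    Real.arcsin ⟪qn3 a b c d, qn4 a b c d⟫ = -dihedralArcsin (b - a) (d - c) (b - c) := by
  obtain ⟨-, -, ⟨h3, h4⟩, -⟩ := cross3_quadrilateral_corners a b c d
  rw [qn3, qn4, h3, h4, unitVec_neg, inner_neg_right, real_inner_comm, Real.arcsin_neg,
    dihedralArcsin]

theorem arcsin_inner_qn4_qn1 (a b c d : R3) :
    Real.arcsin ⟪qn4 a b c d, qn1 a b c d⟫ = dihedralArcsin (b - a) (d - c) (a - c) := by
  obtain ⟨-, -, -, h4, h1⟩ := cross3_quadrilateral_corners a b c d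
  rw [qn4, qn1, h4, h1, unitVec_neg, unitVec_neg, inner_neg_neg, dihedralArcsin]

/-- The Gauss linking integral of two segments spanned by affinely independent points
admits the finite form given by the sum of the four arcsines of inner products of
consecutive unit quadrilateral normals. -/
theorem gauss_linking_integral_finite_form (a b c d : R3)
    (h : AffineIndependent ℝ ![a, b, c, d]) :
    4 * Real.pi * |gaussL a b c d| =
      Real.arcsin ⟪qn1 a b c d, qn2 a b c d⟫ +
        Real.arcsin ⟪qn2 a b c d, qn3 a b c d⟫ +
        Real.arcsin ⟪qn3 a b c d, qn4 a b c d⟫ +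
        Real.arcsin ⟪qn4 a b c d, qn1 a b c d⟫ := by
  rw [four_pi_mul_abs_gaussL, integral_integral_abs_det3_div_norm_pow_three
      (det3_ne_zero_of_affineIndependent h),
    arcsin_inner_qn1_qn2, arcsin_inner_qn2_qn3, arcsin_inner_qn3_qn4, arcsin_inner_qn4_qn1]
  ring
end
end

section
/- Let a₀, a₁, a₂, a₃ ∈ ℝ² with a₀ ≠ a₁, and suppose neither a₂ nor a₃ lies on the affine line through a₀ and a₁. If the open segments (a₀,a₁) and (a₂,a₃) have a point in common, then the open segments (a₁,a₂) and (a₃,a₀) are disjoint. (Hence in any generic planar projection of a closed polygon with four edges, the two pairs of opposite edges cannot both cross: at most one crossing occurs.) -/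
/-!
The line `s` through `a₀, a₁` meets the open segment `(a₂, a₃)`, so `a₂` and `a₃` lie strictly
on opposite sides of `s`. Each point of `(a₁, a₂)` lies strictly on the side of `a₂`, and each
point of `(a₃, a₀)` strictly on the side of `a₃`, since one endpoint of each segment is on `s`.
A common point would therefore put `a₂` and `a₃` on the same side of `s`.
-/

noncomputable section

/-- The Euclidean plane. -/
abbrev R2 := EuclideanSpace ℝ (Fin 2)

namespace AffineSubspace

variable {R V : Type*} [Field R] [LinearOrder R] [IsStrictOrderedRing R]
  [AddCommGroup V] [Module R V] {s : AffineSubspace R V} {x y p : V}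

theorem sSameSide_of_mem_openSegment_of_left_mem (hx : x ∈ s) (hy : y ∉ s)
    (hp : p ∈ openSegment R x y) : s.SSameSide p y := by
  rw [openSegment_eq_image_lineMap] at hp
  obtain ⟨t, ht, rfl⟩ := hp
  exact sSameSide_lineMap_left hx hy ht.1

theorem sSameSide_of_mem_openSegment_of_right_mem (hx : x ∉ s) (hy : y ∈ s)
    (hp : p ∈ openSegment R x y) : s.SSameSide p x :=
  sSameSide_of_mem_openSegment_of_left_mem hy hx (openSegment_symm R x y ▸ hp)

theorem sOppSide_of_mem_openSegment (hx : x ∉ s) (hp : p ∈ openSegment R x y) (hps : p ∈ s) :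
    s.SOppSide x y := by
  have hxy : x ≠ y := by
    rintro rfl
    rw [openSegment_same, Set.mem_singleton_iff] at hp
    exact hx (hp ▸ hps)
  have hsbtw : Sbtw R x p y :=
    sbtw_iff_mem_image_Ioo_and_ne.2 ⟨openSegment_eq_image_lineMap R x y ▸ hp, hxy⟩
  exact hsbtw.sOppSide_of_notMem_of_mem hx hps

theorem disjoint_openSegment_of_sOppSide {a₀ a₁ a₂ a₃ : V} (h₀ : a₀ ∈ s) (h₁ : a₁ ∈ s)
    (hopp : s.SOppSide a₂ a₃) : Disjoint (openSegment R a₁ a₂) (openSegment R a₃ a₀) := by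
  rw [Set.disjoint_left]
  intro p hp₁₂ hp₃₀
  have hp₂ := sSameSide_of_mem_openSegment_of_left_mem h₁ hopp.left_notMem hp₁₂
  have hp₃ := sSameSide_of_mem_openSegment_of_right_mem hopp.right_notMem h₀ hp₃₀
  exact hopp.not_sSameSide (hp₂.symm.trans hp₃)

end AffineSubspace

theorem quadrilateral_at_most_one_crossing_general (a₀ a₁ a₂ a₃ : R2)
    (h2 : a₂ ∉ line[ℝ, a₀, a₁])
    (hcross : (openSegment ℝ a₀ a₁ ∩ openSegment ℝ a₂ a₃).Nonempty) :
    Disjoint (openSegment ℝ a₁ a₂) (openSegment ℝ a₃ a₀) := by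
  obtain ⟨c, hc₀₁, hc₂₃⟩ := hcross
  have hc : c ∈ line[ℝ, a₀, a₁] :=
    (AffineSubspace.convex _).openSegment_subset (left_mem_affineSpan_pair ℝ a₀ a₁)
      (right_mem_affineSpan_pair ℝ a₀ a₁) hc₀₁
  exact AffineSubspace.disjoint_openSegment_of_sOppSide (left_mem_affineSpan_pair ℝ a₀ a₁)
    (right_mem_affineSpan_pair ℝ a₀ a₁) (AffineSubspace.sOppSide_of_mem_openSegment h2 hc₂₃ hc)

/-- If `a₀ ≠ a₁` and neither `a₂` nor `a₃` lies on the line through `a₀, a₁`, and the open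
segments `(a₀,a₁)` and `(a₂,a₃)` meet, then the open segments `(a₁,a₂)` and `(a₃,a₀)` are
disjoint: in a generic planar projection of a closed quadrilateral at most one pair of
opposite edges crosses. -/
theorem quadrilateral_at_most_one_crossing (a₀ a₁ a₂ a₃ : R2)
    (h01 : a₀ ≠ a₁)
    (h2 : a₂ ∉ line[ℝ, a₀, a₁]) (h3 : a₃ ∉ line[ℝ, a₀, a₁])
    (hcross : (openSegment ℝ a₀ a₁ ∩ openSegment ℝ a₂ a₃).Nonempty) :
    Disjoint (openSegment ℝ a₁ a₂) (openSegment ℝ a₃ a₀) :=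
  quadrilateral_at_most_one_crossing_general a₀ a₁ a₂ a₃ h2 hcross
end
end

section
/- Let q₀, q₁, q₂, q₃ ∈ ℝ³ be affinely independent, forming the closed quadrilateral P₄ with edges e₁ = [q₀,q₁], e₂ = [q₁,q₂], e₃ = [q₂,q₃], e₄ = [q₃,q₀]. Define the writhe Wr(P₄) = (1/(4π)) Σ_{(i,j), i≠j} ∫₀¹∫₀¹ det(dᵢ, dⱼ, γᵢ(t)−γⱼ(s)) / ‖γᵢ(t)−γⱼ(s)‖³ ds dt, the sum over ordered pairs of distinct edges, γᵢ the linear parametrization of eᵢ and dᵢ its direction vector. Then Wr(P₄) = 2·L(q₀,q₁;q₂,q₃) + 2·L(q₁,q₂;q₃,q₀): only the two pairs of opposite (non-adjacent) edges contribute to the writhe of a quadrilateral. -/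
open MeasureTheory RealInnerProductSpace

noncomputable section

/-- The (unnormalized) signed Gauss integral of the segments `[a,b]` and `[c,d]`. -/
def rawGauss (a b c d : R3) : ℝ :=
  ∫ t in (0:ℝ)..1, ∫ s in (0:ℝ)..1,
    det3 (b - a) (d - c) ((a + t • (b - a)) - (c + s • (d - c))) /
      ‖(a + t • (b - a)) - (c + s • (d - c))‖ ^ 3

/-- The triple product vanishes when the third argument lies in the span of the first two. -/
lemma det3_span (u v : R3) (x y : ℝ) : det3 u v (x • u + y • v) = 0 := by
  simp [det3, cross3, PiLp.inner_apply, Fin.sum_univ_three, EuclideanSpace.equiv]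
  ring

/-- Swapping the first two arguments and negating the third preserves the triple product. -/
lemma det3_swap_neg (u v w : R3) : det3 v u (-w) = det3 u v w := by
  simp [det3, cross3, PiLp.inner_apply, Fin.sum_univ_three, EuclideanSpace.equiv]
  ring

/-- Adjacent edges `[a,b]`, `[b,c]` contribute nothing: the integrand vanishes. -/
lemma rawGauss_adj₁ (a b c : R3) : rawGauss a b b c = 0 := by
  unfold rawGauss
  have h : ∀ t s : ℝ, (a + t • (b - a)) - (b + s • (c - b)) =
      (t - 1) • (b - a) + (-s) • (c - b) := by intro t s; module
  simp only [h, det3_span, zero_div, intervalIntegral.integral_zero]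

/-- Adjacent edges `[b,c]`, `[a,b]` contribute nothing: the integrand vanishes. -/
lemma rawGauss_adj₂ (a b c : R3) : rawGauss b c a b = 0 := by
  unfold rawGauss
  have h : ∀ t s : ℝ, (b + t • (c - b)) - (a + s • (b - a)) =
      t • (c - b) + (1 - s) • (b - a) := by intro t s; module
  simp only [h, det3_span, zero_div, intervalIntegral.integral_zero]

/-- Symmetry of the Gauss integral for non-intersecting segment lines (Fubini). -/
lemma rawGauss_symm (a b c d : R3)
    (hne : ∀ t s : ℝ, (a + t • (b - a)) ≠ (c + s • (d - c))) :
    rawGauss c d a b = rawGauss a b c d := by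
  set F : ℝ → ℝ → ℝ := fun t s =>
    det3 (b - a) (d - c) ((a + t • (b - a)) - (c + s • (d - c))) /
      ‖(a + t • (b - a)) - (c + s • (d - c))‖ ^ 3 with hF
  have hcont : Continuous (Function.uncurry F) := by
    apply Continuous.div
    · exact (continuous_const.inner (by fun_prop))
    · fun_prop
    · intro p
      have h1 : (a + p.1 • (b - a)) - (c + p.2 • (d - c)) ≠ 0 :=
        sub_ne_zero.mpr (hne p.1 p.2)
      exact pow_ne_zero _ (norm_ne_zero_iff.mpr h1)
  have hint : Integrable (Function.uncurry F) ((volume.restrict (Set.Ioc (0:ℝ) 1)).prod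
      (volume.restrict (Set.Ioc (0:ℝ) 1))) := by
    rw [Measure.prod_restrict]
    exact (hcont.continuousOn.integrableOn_compact (isCompact_Icc.prod isCompact_Icc)).mono_set
      (Set.prod_mono Set.Ioc_subset_Icc_self Set.Ioc_subset_Icc_self)
  have key : (∫ t in (0:ℝ)..1, ∫ s in (0:ℝ)..1, F t s) =
      ∫ s in (0:ℝ)..1, ∫ t in (0:ℝ)..1, F t s := by
    simp only [intervalIntegral.integral_of_le zero_le_one]
    exact integral_integral_swap hint
  have heq : rawGauss c d a b = ∫ t in (0:ℝ)..1, ∫ s in (0:ℝ)..1, F s t := by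
    unfold rawGauss
    congr 1; ext t; congr 1; ext s
    have hv : (c + t • (d - c)) - (a + s • (b - a)) =
        -((a + s • (b - a)) - (c + t • (d - c))) := by abel
    rw [hF]
    simp only [hv, det3_swap_neg, norm_neg]
  rw [heq, ← key]; rfl

/-- Opposite segments `[q₀,q₁]` and `[q₂,q₃]` of an affinely independent quadruple
never meet (even their lines do not meet). -/
lemma seg_ne₁ (q₀ q₁ q₂ q₃ : R3) (h : AffineIndependent ℝ ![q₀, q₁, q₂, q₃]) :
    ∀ t s : ℝ, q₀ + t • (q₁ - q₀) ≠ q₂ + s • (q₃ - q₂) := by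
  intro t s heq
  rw [affineIndependent_iff] at h
  have h0 : q₀ + t • (q₁ - q₀) - (q₂ + s • (q₃ - q₂)) = 0 := sub_eq_zero.mpr heq
  have := h Finset.univ ![1 - t, t, s - 1, -s]
    (by simp [Fin.sum_univ_four]; try ring)
    (by
      simp only [Fin.sum_univ_four, Matrix.cons_val_zero, Matrix.cons_val_one,
        Matrix.head_cons, Matrix.cons_val_two, Matrix.tail_cons, Matrix.cons_val_three]
      linear_combination (norm := module) h0)
  have h1 := this 0 (Finset.mem_univ _)
  have h2 := this 1 (Finset.mem_univ _)
  simp at h1 h2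
  linarith

/-- Opposite segments `[q₁,q₂]` and `[q₃,q₀]` of an affinely independent quadruple
never meet (even their lines do not meet). -/
lemma seg_ne₂ (q₀ q₁ q₂ q₃ : R3) (h : AffineIndependent ℝ ![q₀, q₁, q₂, q₃]) :
    ∀ t s : ℝ, q₁ + t • (q₂ - q₁) ≠ q₃ + s • (q₀ - q₃) := by
  intro t s heq
  rw [affineIndependent_iff] at h
  have h0 : q₁ + t • (q₂ - q₁) - (q₃ + s • (q₀ - q₃)) = 0 := sub_eq_zero.mpr heq
  have := h Finset.univ ![-s, 1 - t, t, s - 1]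
    (by simp [Fin.sum_univ_four]; try ring)
    (by
      simp only [Fin.sum_univ_four, Matrix.cons_val_zero, Matrix.cons_val_one,
        Matrix.head_cons, Matrix.cons_val_two, Matrix.tail_cons, Matrix.cons_val_three]
      linear_combination (norm := module) h0)
  have h1 := this 1 (Finset.mem_univ _)
  have h2 := this 2 (Finset.mem_univ _)
  simp at h1 h2
  linarith

lemma gaussL_eq (a b c d : R3) : gaussL a b c d = (1 / (4 * Real.pi)) * rawGauss a b c d := rfl

/-- The writhe of the closed quadrilateral with vertices `q₀ q₁ q₂ q₃` equals twice the sum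
of the Gauss linking integrals of its two pairs of opposite edges: only non-adjacent edge
pairs contribute. -/
theorem writhe_quadrilateral (q₀ q₁ q₂ q₃ : R3)
    (h : AffineIndependent ℝ ![q₀, q₁, q₂, q₃]) :
    ((1 / (4 * Real.pi)) *
        ∑ i : Fin 4, ∑ j ∈ Finset.univ.erase i,
          rawGauss (![q₀, q₁, q₂, q₃] i) (![q₁, q₂, q₃, q₀] i)
            (![q₀, q₁, q₂, q₃] j) (![q₁, q₂, q₃, q₀] j)) =
      2 * gaussL q₀ q₁ q₂ q₃ + 2 * gaussL q₁ q₂ q₃ q₀ := by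
  have e0 : (Finset.univ.erase (0 : Fin 4)) = {1, 2, 3} := by decide
  have e1 : (Finset.univ.erase (1 : Fin 4)) = {0, 2, 3} := by decide
  have e2 : (Finset.univ.erase (2 : Fin 4)) = {0, 1, 3} := by decide
  have e3 : (Finset.univ.erase (3 : Fin 4)) = {0, 1, 2} := by decide
  rw [Fin.sum_univ_four, e0, e1, e2, e3]
  rw [show ({1,2,3} : Finset (Fin 4)) = insert 1 (insert 2 {3}) from rfl,
      show ({0,2,3} : Finset (Fin 4)) = insert 0 (insert 2 {3}) from rfl,
      show ({0,1,3} : Finset (Fin 4)) = insert 0 (insert 1 {3}) from rfl,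
      show ({0,1,2} : Finset (Fin 4)) = insert 0 (insert 1 {2}) from rfl]
  repeat rw [Finset.sum_insert (by decide)]
  repeat rw [Finset.sum_singleton]
  simp only [Matrix.cons_val_zero, Matrix.cons_val_one, Matrix.head_cons,
    Matrix.cons_val_two, Matrix.tail_cons, Matrix.cons_val_three]
  rw [rawGauss_adj₁ q₀ q₁ q₂, rawGauss_adj₁ q₁ q₂ q₃, rawGauss_adj₁ q₂ q₃ q₀,
      rawGauss_adj₁ q₃ q₀ q₁,
      rawGauss_adj₂ q₃ q₀ q₁, rawGauss_adj₂ q₀ q₁ q₂, rawGauss_adj₂ q₁ q₂ q₃,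
      rawGauss_adj₂ q₂ q₃ q₀,
      rawGauss_symm q₀ q₁ q₂ q₃ (seg_ne₁ q₀ q₁ q₂ q₃ h),
      rawGauss_symm q₁ q₂ q₃ q₀ (seg_ne₂ q₀ q₁ q₂ q₃ h),
      gaussL_eq, gaussL_eq]
  ring
end
end

section
/- Let a₀, a₁, a₂, a₃, a₄ ∈ ℝ² be the vertices of an open polygonal chain with edges e₁ = [a₀,a₁], e₂ = [a₁,a₂], e₃ = [a₂,a₃], e₄ = [a₃,a₄]. Suppose a₀ ≠ a₁ and that neither a₂ nor a₃ lies on the affine line through a₀ and a₁. If the open segments (a₀,a₁) and (a₂,a₃) intersect, and the open segments (a₁,a₂) and (a₃,a₄) intersect, then the closed segments [a₀,a₁] and [a₃,a₄] also intersect. (Hence a planar diagram of an open chain with 4 edges in which exactly the edge pairs (e₁,e₃) and (e₂,e₄) cross is not realizable.) -/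
noncomputable section

/-- For an open polygonal chain `a₀ a₁ a₂ a₃ a₄` in the plane (generic with respect to the
first edge): if the open segments `(a₀,a₁)` and `(a₂,a₃)` intersect and the open segments
`(a₁,a₂)` and `(a₃,a₄)` intersect, then the closed segments `[a₀,a₁]` and `[a₃,a₄]` also
intersect.  Hence a diagram of a 4-edge open chain in which exactly the pairs `(e₁,e₃)` and
`(e₂,e₄)` cross is not realizable. -/
theorem open_chain_double_crossing_forces_third (a₀ a₁ a₂ a₃ a₄ : R2)
    (h01 : a₀ ≠ a₁)
    (h2 : a₂ ∉ line[ℝ, a₀, a₁]) (h3 : a₃ ∉ line[ℝ, a₀, a₁])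
    (h13 : (openSegment ℝ a₀ a₁ ∩ openSegment ℝ a₂ a₃).Nonempty)
    (h24 : (openSegment ℝ a₁ a₂ ∩ openSegment ℝ a₃ a₄).Nonempty) :
    (segment ℝ a₀ a₁ ∩ segment ℝ a₃ a₄).Nonempty := by
  obtain ⟨x, hx01, hx23⟩ := h13
  obtain ⟨q, hq12, hq34⟩ := h24
  obtain ⟨f, c, hfs, hfx2⟩ := geometric_hahn_banach_closed_point
    ((line[ℝ, a₀, a₁] : AffineSubspace ℝ R2).convex)
    (line[ℝ, a₀, a₁] : AffineSubspace ℝ R2).closed_of_finiteDimensional h2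
  have h0m : a₀ ∈ line[ℝ, a₀, a₁] := left_mem_affineSpan_pair ℝ a₀ a₁
  have h1m : a₁ ∈ line[ℝ, a₀, a₁] := right_mem_affineSpan_pair ℝ a₀ a₁
  -- f is constant on the line
  have hf10 : f a₁ = f a₀ := by
    by_contra hne
    have hdne : f a₁ - f a₀ ≠ 0 := sub_ne_zero.mpr hne
    set T : ℝ := (|c - f a₀| + 1) / (f a₁ - f a₀) with hT
    have hmem : T • (a₁ -ᵥ a₀) +ᵥ a₀ ∈ line[ℝ, a₀, a₁] :=
      AffineSubspace.smul_vsub_vadd_mem _ T h1m h0m h0m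
    have hlt := hfs _ hmem
    have heq : f (T • (a₁ -ᵥ a₀) +ᵥ a₀) = T * (f a₁ - f a₀) + f a₀ := by
      simp [vsub_eq_sub, vadd_eq_add, map_add, map_smul, map_sub, smul_eq_mul]
    rw [heq, hT, div_mul_cancel₀ _ hdne] at hlt
    have h1 := le_abs_self (c - f a₀)
    linarith
  obtain ⟨e₀, e₁, he₀, he₁, he, hxeq⟩ := hx01
  obtain ⟨t₂, t₃, ht₂, ht₃, ht, hxeq'⟩ := hx23
  obtain ⟨s₁, s₂, hs₁, hs₂, hs, hqeq⟩ := hq12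
  obtain ⟨m₃, m₄, hm₃, hm₄, hm, hqeq'⟩ := hq34
  set c₂ : ℝ := f a₂ - f a₀ with hc₂
  set c₃ : ℝ := f a₃ - f a₀ with hc₃
  have hc₂pos : 0 < c₂ := by
    have h5 := hfs a₀ h0m
    rw [hc₂]; linarith
  have hfx : f x = f a₀ := by
    have h6 : f x = e₀ * f a₀ + e₁ * f a₁ := by
      rw [← hxeq]; simp [map_add, map_smul, smul_eq_mul]
    rw [h6, hf10]; linear_combination f a₀ * he
  have h4 : f x = t₂ * f a₂ + t₃ * f a₃ := by
    rw [← hxeq']; simp [map_add, map_smul, smul_eq_mul]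
  have hkey23 : t₂ * c₂ + t₃ * c₃ = 0 := by
    rw [hc₂, hc₃]
    linear_combination hfx - h4 - f a₀ * ht
  have hc₃neg : c₃ < 0 := by nlinarith [mul_pos ht₂ hc₂pos]
  have h6 : f q = s₁ * f a₁ + s₂ * f a₂ := by
    rw [← hqeq]; simp [map_add, map_smul, smul_eq_mul]
  have hfq : f q - f a₀ = s₂ * c₂ := by
    rw [hc₂]
    linear_combination h6 + s₁ * hf10 + f a₀ * hs
  have hcq : 0 < s₂ * c₂ := mul_pos hs₂ hc₂pos
  obtain ⟨u, hu0, hu1, hueq⟩ : ∃ u : ℝ, 0 < u ∧ u < 1 ∧ (1 - u) * c₃ + u * (s₂ * c₂) = 0 := by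
    have hden : c₃ - s₂ * c₂ < 0 := by linarith
    have hdne2 : c₃ - s₂ * c₂ ≠ 0 := ne_of_lt hden
    refine ⟨c₃ / (c₃ - s₂ * c₂), div_pos_of_neg_of_neg hc₃neg hden, ?_, ?_⟩
    · rw [div_lt_one_iff]
      right; right; exact ⟨hden, by linarith⟩
    · field_simp
      ring
  set r : R2 := (1 - u) • a₃ + u • q with hr
  have hA : r ∈ segment ℝ a₃ a₄ :=
    (convex_segment a₃ a₄) (left_mem_segment ℝ a₃ a₄)
      (openSegment_subset_segment ℝ a₃ a₄ ⟨m₃, m₄, hm₃, hm₄, hm, hqeq'⟩)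
      (by linarith) (le_of_lt hu0) (by ring)
  have hbc : u * s₂ * c₂ = -((1 - u) * c₃) := by
    linear_combination hueq
  have hkeyscal : u * s₂ * t₃ = (1 - u) * t₂ := by
    have h7 : u * s₂ * t₃ * c₂ = (1 - u) * t₂ * c₂ := by
      linear_combination t₃ * hbc - (1 - u) * hkey23
    exact mul_right_cancel₀ (ne_of_gt hc₂pos) h7
  have hB : r ∈ segment ℝ a₀ a₁ := by
    have hxseg : x ∈ segment ℝ a₀ a₁ :=
      openSegment_subset_segment ℝ a₀ a₁ ⟨e₀, e₁, he₀, he₁, he, hxeq⟩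
    have hreq : r = (u * s₂ + (1 - u)) • x + (u * s₁) • a₁ := by
      rw [hr, ← hqeq, ← hxeq']
      match_scalars
      all_goals first
        | linear_combination -hkeyscal + (u - 1) * ht
        | linear_combination hkeyscal - (u * s₂) * ht
        | ring
    rw [hreq]
    refine (convex_segment a₀ a₁) hxseg (right_mem_segment ℝ a₀ a₁) ?_ ?_ ?_
    · exact add_nonneg (mul_pos hu0 hs₂).le (by linarith)
    · exact (mul_pos hu0 hs₁).le
    · linear_combination u * hs
  exact ⟨r, hB, hA⟩
end
end
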